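/- For 0 ≤ p < ∞ on a nonatomic probability space and α ∈ (0,1), the Value-at-Risk acceptance set A_α = {X ∈ L^p : P(X < 0) ≤ α} has interior equal to {X ∈ L^p : P(X ≤ 0) < α}. In particular, for S_T ∈ L^p_+, S_T is an interior point of A_α if and only if P(S_T = 0) < α. -/

import Mathlib

open MeasureTheory Filter Topology ENNReal

variable {Ω : Type*} [MeasureSpace Ω] [IsProbabilityMeasure (volume : Measure Ω)]

/-- The Value-at-Risk acceptance set at level α in Lᵖ. -/
def varAcc (p : ℝ≥0∞) (α : ℝ) : Set (Lp ℝ p (volume : Measure Ω)) :=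
  {f | volume {ω | f ω < 0} ≤ ENNReal.ofReal α}

/-! If `μ {f ≤ 0} < c`, then by right continuity already `μ {f ≤ ε} < c` for some `ε > 0`, and
every `g` close to `f` in `Lᵖ` is within `ε` of `f` outside a set of small measure (convergence in
`Lᵖ` implies convergence in measure), so `μ {g < 0} ≤ c`. Conversely, if `μ {f ≤ 0} ≥ c`, then
`g = f - δ - 𝟙ₜ f` is negative on `{f ≤ 0} ∪ t`; nonatomicity provides `t` of arbitrarily small
measure with `μ ({f ≤ 0} ∪ t) > c`, and uniform integrability of `|f|ᵖ` makes `g` close to `f`. -/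

section

variable {α : Type*} [MeasurableSpace α] {μ : Measure α}

variable (μ) in
def IsNonatomic : Prop :=
  ∀ s : Set α, MeasurableSet s → 0 < μ s → ∃ t ⊆ s, MeasurableSet t ∧ 0 < μ t ∧ μ t < μ s

namespace IsNonatomic

theorem exists_subset_two_mul_measure_le (hμ : IsNonatomic μ) {s : Set α} (hs : MeasurableSet s)
    (h0 : 0 < μ s) : ∃ t ⊆ s, MeasurableSet t ∧ 0 < μ t ∧ 2 * μ t ≤ μ s := by
  obtain ⟨t, hts, ht, ht0, hlt⟩ := hμ s hs h0
  have hsum : μ t + μ (s \ t) = μ s := by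
    rw [← measure_inter_add_sdiff s ht, Set.inter_eq_right.mpr hts]
  have hd0 : 0 < μ (s \ t) := by
    refine pos_iff_ne_zero.mpr fun hd => hlt.ne ?_
    rw [← hsum, hd, add_zero]
  rcases le_total (μ t) (μ (s \ t)) with hle | hle
  · exact ⟨t, hts, ht, ht0, by rw [two_mul, ← hsum]; gcongr⟩
  · exact ⟨s \ t, Set.sdiff_subset, hs.diff ht, hd0, by rw [two_mul, ← hsum]; gcongr⟩

theorem exists_subset_measure_lt (hμ : IsNonatomic μ) {s : Set α} (hs : MeasurableSet s)
    (h0 : 0 < μ s) (hfin : μ s ≠ ∞) {ε : ℝ≥0∞} (hε : 0 < ε) :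
    ∃ t ⊆ s, MeasurableSet t ∧ 0 < μ t ∧ μ t < ε := by
  have halving (n : ℕ) : ∃ t ⊆ s, MeasurableSet t ∧ 0 < μ t ∧ μ t ≤ μ s * 2⁻¹ ^ n := by
    induction n with
    | zero => exact ⟨s, subset_rfl, hs, h0, by simp⟩
    | succ n ih =>
      obtain ⟨t, hts, ht, ht0, htle⟩ := ih
      obtain ⟨u, hut, hu, hu0, hule⟩ := hμ.exists_subset_two_mul_measure_le ht ht0
      refine ⟨u, hut.trans hts, hu, hu0, ?_⟩
      calc μ u = 2⁻¹ * (2 * μ u) := by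
            rw [← mul_assoc, ENNReal.inv_mul_cancel two_ne_zero ofNat_ne_top, one_mul]
        _ ≤ 2⁻¹ * (μ s * 2⁻¹ ^ n) := by gcongr 2⁻¹ * ?_; exact hule.trans htle
        _ = μ s * 2⁻¹ ^ (n + 1) := by ring
  obtain ⟨n, hn⟩ := ENNReal.exists_inv_two_pow_lt (ENNReal.div_pos hε.ne' hfin).ne'
  obtain ⟨t, hts, ht, ht0, htle⟩ := halving n
  refine ⟨t, hts, ht, ht0, htle.trans_lt ?_⟩
  calc μ s * 2⁻¹ ^ n < μ s * (ε / μ s) := ENNReal.mul_lt_mul_right h0.ne' hfin hn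
    _ = ε := ENNReal.mul_div_cancel h0.ne' hfin

theorem exists_lt_measure_union [IsFiniteMeasure μ] (hμ : IsNonatomic μ) {s : Set α}
    (hs : MeasurableSet s) {c : ℝ≥0∞} (hcs : c ≤ μ s) (hc : c < μ Set.univ) {η : ℝ≥0∞}
    (hη : 0 < η) : ∃ t, MeasurableSet t ∧ μ t < η ∧ c < μ (s ∪ t) := by
  rcases hcs.lt_or_eq with hlt | rfl
  · exact ⟨∅, MeasurableSet.empty, by simpa using hη, by simpa using hlt⟩
  have hcompl : 0 < μ sᶜ := by
    rw [← measure_add_measure_compl hs] at hc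
    exact pos_iff_ne_zero.mpr fun h => by simp [h] at hc
  obtain ⟨t, hts, ht, ht0, htη⟩ :=
    hμ.exists_subset_measure_lt hs.compl hcompl (measure_ne_top _ _) hη
  refine ⟨t, ht, htη, ?_⟩
  rw [measure_union (Set.disjoint_left.mpr fun _ hω hωt => hts hωt hω) ht]
  exact ENNReal.lt_add_right (measure_ne_top _ _) ht0.ne'

end IsNonatomic

theorem tendsto_measure_setOf_le_nhdsGT [IsFiniteMeasure μ] {f : α → ℝ} (hf : Measurable f)
    (a : ℝ) :
    Tendsto (fun b => μ {x | f x ≤ b}) (𝓝[>] a) (𝓝 (μ {x | f x ≤ a})) := by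
  have hinter : ⋂ b > a, {x | f x ≤ b} = {x | f x ≤ a} := by
    ext x
    simp only [Set.mem_iInter]
    exact ⟨fun h => le_of_forall_gt_imp_ge_of_dense h, fun h b hb => h.trans hb.le⟩
  rw [← hinter]
  exact tendsto_measure_biInter_gt
    (fun _ _ => (measurableSet_le hf measurable_const).nullMeasurableSet)
    (fun _ _ _ hbc _ hx => le_trans hx hbc) ⟨a + 1, by linarith, measure_ne_top _ _⟩

namespace MeasureTheory.Lp

variable {p : ℝ≥0∞} [Fact (1 ≤ p)]

theorem exists_mem_ball_nonpos_union_ae_le_neg [IsFiniteMeasure μ] (hp : p ≠ ∞) (f : Lp ℝ p μ)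
    {r : ℝ} (hr : 0 < r) :
    ∃ η > 0, ∀ t, MeasurableSet t → μ t ≤ ENNReal.ofReal η →
      ∃ g ∈ Metric.ball f r, ({x | f x ≤ 0} ∪ t : Set α) ≤ᵐ[μ] {x | g x < 0} := by
  have hconst : Tendsto (Lp.const p μ) (𝓝 (0 : ℝ)) (𝓝 0) :=
    (Lp.constL p μ ℝ).continuous.tendsto' 0 0 (map_zero _)
  obtain ⟨δ, hδ_small, hδ⟩ := (hconst.eventually (Metric.ball_mem_nhds 0 (half_pos hr))).filter_mono
    nhdsWithin_le_nhds |>.and (self_mem_nhdsWithin (s := Set.Ioi 0)) |>.exists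
  obtain ⟨η, hη, hηf⟩ := (Lp.memLp f).eLpNorm_indicator_le Fact.out hp (half_pos hr)
  refine ⟨η, hη, fun t ht htη => ?_⟩
  set h := ((Lp.memLp f).indicator ht).toLp
  refine ⟨f - Lp.const p μ δ - h, ?_, ?_⟩
  · have hh_norm : ‖h‖ ≤ r / 2 := by
      rw [Lp.norm_toLp]
      exact ENNReal.toReal_le_of_le_ofReal (half_pos hr).le (hηf t ht htη)
    rw [Metric.mem_ball, dist_eq_norm_sub,
      show f - Lp.const p μ δ - h - f = -(Lp.const p μ δ + h) by abel, norm_neg]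
    calc ‖Lp.const p μ δ + h‖ ≤ ‖Lp.const p μ δ‖ + ‖h‖ := norm_add_le _ _
      _ < r / 2 + r / 2 := add_lt_add_of_lt_of_le (mem_ball_zero_iff.mp hδ_small) hh_norm
      _ = r := add_halves r
  · have hc : (Lp.const p μ δ : α → ℝ) =ᵐ[μ] fun _ => δ := Lp.coeFn_const p μ δ
    have hh_ae : (h : α → ℝ) =ᵐ[μ] t.indicator f := MemLp.coeFn_toLp _
    filter_upwards [Lp.coeFn_sub (f - Lp.const p μ δ) h, Lp.coeFn_sub f (Lp.const p μ δ), hc,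
      hh_ae]
      with x hg hfδ hδx hhx hx
    change _ < _
    rw [hg, Pi.sub_apply, hfδ, Pi.sub_apply, hδx, hhx]
    by_cases hxt : x ∈ t
    · rw [Set.indicator_of_mem hxt]; linarith
    · rw [Set.indicator_of_notMem hxt]
      have : f x ≤ 0 := hx.resolve_right hxt
      linarith

theorem mem_interior_setOf_measure_neg_le [IsFiniteMeasure μ] {c : ℝ≥0∞} {f : Lp ℝ p μ}
    (hf : μ {x | f x ≤ 0} < c) : f ∈ interior {g : Lp ℝ p μ | μ {x | g x < 0} ≤ c} := by
  have hright := tendsto_measure_setOf_le_nhdsGT (μ := μ) (Lp.stronglyMeasurable f).measurable 0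
  obtain ⟨ε, hεc, hε⟩ := (hright.eventually (gt_mem_nhds hf)).and self_mem_nhdsWithin |>.exists
  have hclose := tendstoInMeasure_of_tendsto_Lp (tendsto_id (x := 𝓝 f)) (ENNReal.ofReal ε)
    (ENNReal.ofReal_pos.mpr hε)
  rw [mem_interior_iff_mem_nhds]
  filter_upwards [hclose.eventually (gt_mem_nhds (tsub_pos_of_lt hεc))] with g hg
  have hsub : {x | g x < 0} ⊆ {x | f x ≤ ε} ∪ {x | ENNReal.ofReal ε ≤ edist (g x) (f x)} := by
    intro x hx
    by_cases hfx : f x ≤ ε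
    · exact Or.inl hfx
    · have hgx : g x < 0 := hx
      refine Or.inr (?_ : ENNReal.ofReal ε ≤ edist (g x) (f x))
      rw [edist_dist, Real.dist_eq, abs_sub_comm]
      exact ENNReal.ofReal_le_ofReal (le_abs.mpr (Or.inl (by linarith [not_le.mp hfx])))
  calc μ {x | g x < 0}
      ≤ μ {x | f x ≤ ε} + μ {x | ENNReal.ofReal ε ≤ edist (g x) (f x)} :=
        (measure_mono hsub).trans (measure_union_le _ _)
    _ ≤ μ {x | f x ≤ ε} + (c - μ {x | f x ≤ ε}) := by gcongr; exact hg.le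
    _ = c := add_tsub_cancel_of_le hεc.le

theorem measure_nonpos_lt_of_mem_interior [IsFiniteMeasure μ] (hμ : IsNonatomic μ) (hp : p ≠ ∞)
    {c : ℝ≥0∞} (hc : c < μ Set.univ) {f : Lp ℝ p μ}
    (hf : f ∈ interior {g : Lp ℝ p μ | μ {x | g x < 0} ≤ c}) : μ {x | f x ≤ 0} < c := by
  by_contra! hcf
  obtain ⟨r, hr, hball⟩ := Metric.mem_nhds_iff.mp (mem_interior_iff_mem_nhds.mp hf)
  obtain ⟨η, hη, hperturb⟩ := exists_mem_ball_nonpos_union_ae_le_neg hp f hr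
  obtain ⟨t, ht, htη, hct⟩ := hμ.exists_lt_measure_union
    (measurableSet_le (Lp.stronglyMeasurable f).measurable measurable_const) hcf hc
    (ENNReal.ofReal_pos.mpr hη)
  obtain ⟨g, hg, hsub⟩ := hperturb t ht htη.le
  exact (hct.trans_le (measure_mono_ae hsub)).not_ge (hball hg)

theorem interior_setOf_measure_neg_le [IsFiniteMeasure μ] (hμ : IsNonatomic μ) (hp : p ≠ ∞)
    {c : ℝ≥0∞} (hc : c < μ Set.univ) :
    interior {g : Lp ℝ p μ | μ {x | g x < 0} ≤ c} = {f | μ {x | f x ≤ 0} < c} :=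
  Set.ext fun _ => ⟨measure_nonpos_lt_of_mem_interior hμ hp hc, mem_interior_setOf_measure_neg_le⟩

end MeasureTheory.Lp

end

theorem interior_varAcc (p : ℝ≥0∞) [Fact (1 ≤ p)] (hp : p ≠ ∞)
    (hna : ∀ s : Set Ω, MeasurableSet s → 0 < volume s →
      ∃ t ⊆ s, MeasurableSet t ∧ 0 < volume t ∧ volume t < volume s)
    (α : ℝ) (hα : α ∈ Set.Ioo (0 : ℝ) 1) :
    interior (varAcc (Ω := Ω) p α) =
      {f : Lp ℝ p (volume : Measure Ω) | volume {ω | f ω ≤ 0} < ENNReal.ofReal α} ∧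
    ∀ ST : Lp ℝ p (volume : Measure Ω), 0 ≤ ST →
      (ST ∈ interior (varAcc (Ω := Ω) p α) ↔
        volume {ω | ST ω = 0} < ENNReal.ofReal α) := by
  have hαuniv : ENNReal.ofReal α < volume (Set.univ : Set Ω) := by
    rw [measure_univ]
    exact ENNReal.ofReal_lt_one.mpr hα.2
  have hint : interior (varAcc (Ω := Ω) p α) = _ :=
    Lp.interior_setOf_measure_neg_le hna hp hαuniv
  refine ⟨hint, fun ST hST => ?_⟩
  have hzero : {ω | ST ω ≤ 0} =ᵐ[volume] {ω | ST ω = 0} := by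
    filter_upwards [(Lp.coeFn_nonneg ST).mpr hST] with ω hω
    exact propext ⟨fun h => le_antisymm h hω, le_of_eq⟩
  rw [hint, ← measure_congr hzero]
  rfl
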